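/- arXiv:0811.4549 — 5 statements merged into one kernel-verified Lean document; each statement's English description precedes it below -/
import Mathlib

section
/- Let C₁, C₂ and D be abelian categories, where C₁ and C₂ have enough projectives. Let Z : C₂ → D be an exact functor whose restriction to the full subcategory Proj(C₂) of projective objects of C₂ is fully faithful (i.e. for all projective objects P, Q of C₂ the map Hom(P, Q) → Hom(Z(P), Z(Q)) is bijective). Let K, L : C₁ → C₂ be right exact functors that map projective objects to projective objects. Then the map Hom(K, L) → Hom(Z ∘ K, Z ∘ L), sending a natural transformation f to the whiskered transformation 1_Z f, is a bijection. -/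
/-!
Restricting along the inclusion `ι` of the projective objects of `C₁` is injective on
transformations out of a functor preserving epimorphisms, since every object is a quotient
`π X : over X ⟶ X` of a projective one. For right exact `K` it is also surjective: `K.map (π X)`
is a cokernel of `K.map (kernel.ι (π X))`, so a transformation given on projectives descends
to `X`. On the restrictions, whiskering with `Z` is bijective because `K` and `L` take values
in projectives, where `Z` is fully faithful. The square
`whiskerLeft ι ∘ whiskerRight · Z = whiskerRight · Z ∘ whiskerLeft ι` then gives the theorem.
-/

open CategoryTheory CategoryTheory.Limits

namespace CategoryTheory

open Projective

theorem Functor.whiskerRight_bijective_of_map_bijective {C D E : Type*} [Category C]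
    [Category D] [Category E] {F G : C ⥤ E} (Z : E ⥤ D)
    (hZ : ∀ X Y, Function.Bijective (fun f : F.obj X ⟶ G.obj Y => Z.map f)) :
    Function.Bijective (fun α : F ⟶ G => Functor.whiskerRight α Z) := by
  refine ⟨fun α β h => ?_, fun η => ?_⟩
  · ext X
    exact (hZ X X).1 (NatTrans.congr_app h X)
  · let e X := Equiv.ofBijective _ (hZ X X)
    have map_e_symm X : Z.map ((e X).symm (η.app X)) = η.app X := (e X).apply_symm_apply _
    refine ⟨{ app X := (e X).symm (η.app X), naturality X Y u := (hZ X Y).1 ?_ }, ?_⟩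
    · simpa [map_e_symm] using η.naturality u
    · ext X
      exact map_e_symm X

noncomputable def Projective.isColimitCokernelCoforkMapπ {C E : Type*} [Category C]
    [Abelian C] [EnoughProjectives C] [Category E] [HasZeroMorphisms E] (F : C ⥤ E)
    [F.PreservesZeroMorphisms] [PreservesFiniteColimits F] (X : C) :
    IsColimit (CokernelCofork.ofπ (F.map (π X))
      (by rw [← F.map_comp, kernel.condition, F.map_zero]) : Cofork (F.map (kernel.ι (π X))) 0) :=
  isColimitCoforkMapOfIsColimit' F (kernel.condition (π X))
    (Abelian.epiIsCokernelOfKernel _ (limit.isLimit _))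

namespace NatTrans

section

variable {C E : Type*} [Category C] [Category E] {F G : C ⥤ E}

lemma naturality_of_isProjective (β : (isProjective C).ι ⋙ F ⟶ (isProjective C).ι ⋙ G)
    {P Q : C} [Projective P] [Projective Q] (f : P ⟶ Q) :
    F.map f ≫ β.app ⟨Q, ‹_›⟩ = β.app ⟨P, ‹_›⟩ ≫ G.map f :=
  β.naturality (X := ⟨P, ‹_›⟩) (Y := ⟨Q, ‹_›⟩) (ObjectProperty.homMk f)

theorem whiskerLeft_isProjective_ι_injective [EnoughProjectives C] [F.PreservesEpimorphisms] :
    Function.Injective (fun α : F ⟶ G => Functor.whiskerLeft (isProjective C).ι α) := by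
  intro α β h
  ext X
  have h_over : α.app (Projective.over X) = β.app (Projective.over X) :=
    NatTrans.congr_app h ⟨Projective.over X, inferInstance⟩
  rw [← cancel_epi (F.map (π X)), α.naturality, β.naturality, h_over]

end

variable {C E : Type*} [Category C] [Abelian C] [EnoughProjectives C] [Category E]
  [HasZeroMorphisms E] {F G : C ⥤ E} [F.PreservesZeroMorphisms] [PreservesFiniteColimits F]
  [G.PreservesZeroMorphisms] (β : (isProjective C).ι ⋙ F ⟶ (isProjective C).ι ⋙ G)

noncomputable def extendFromProjectivesApp (X : C) : F.obj X ⟶ G.obj X :=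
  (CokernelCofork.IsColimit.desc' (isColimitCokernelCoforkMapπ F X)
    (β.app ⟨Projective.over X, inferInstance⟩ ≫ G.map (π X)) (by
      -- `kernel (π X)` need not be projective, so test the condition on its projective cover.
      rw [← cancel_epi (F.map (π (kernel (π X)))), comp_zero, ← F.map_comp_assoc,
        ← Category.assoc, naturality_of_isProjective, Category.assoc, ← G.map_comp,
        Category.assoc, kernel.condition, comp_zero, G.map_zero, comp_zero])).1

lemma map_π_comp_extendFromProjectivesApp (X : C) :
    F.map (π X) ≫ extendFromProjectivesApp β X =
      β.app ⟨Projective.over X, inferInstance⟩ ≫ G.map (π X) :=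
  (CokernelCofork.IsColimit.desc' (isColimitCokernelCoforkMapπ F X) _ _).2

/-- Every morphism out of a projective object factors through `π X`, whence this identity. -/
lemma map_comp_extendFromProjectivesApp {P X : C} [Projective P] (p : P ⟶ X) :
    F.map p ≫ extendFromProjectivesApp β X = β.app ⟨P, ‹_›⟩ ≫ G.map p := by
  calc F.map p ≫ extendFromProjectivesApp β X
      = F.map (factorThru p (π X)) ≫ F.map (π X) ≫ extendFromProjectivesApp β X := by
        rw [← F.map_comp_assoc, factorThru_comp]
    _ = β.app ⟨P, ‹_›⟩ ≫ G.map p := by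
        rw [map_π_comp_extendFromProjectivesApp, ← Category.assoc,
          naturality_of_isProjective β (factorThru p (π X)), Category.assoc, ← G.map_comp,
          factorThru_comp p (π X)]

noncomputable def extendFromProjectives : F ⟶ G where
  app := extendFromProjectivesApp β
  naturality X Y u := by
    rw [← cancel_epi (F.map (π X)), ← F.map_comp_assoc, map_comp_extendFromProjectivesApp,
      G.map_comp, ← Category.assoc, ← map_π_comp_extendFromProjectivesApp, Category.assoc]

theorem whiskerLeft_extendFromProjectives :
    Functor.whiskerLeft (isProjective C).ι (extendFromProjectives β) = β := by
  ext ⟨P, hP⟩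
  simpa [extendFromProjectives] using map_comp_extendFromProjectivesApp β (𝟙 P)

theorem whiskerLeft_isProjective_ι_surjective :
    Function.Surjective (fun α : F ⟶ G => Functor.whiskerLeft (isProjective C).ι α) :=
  fun β => ⟨extendFromProjectives β, whiskerLeft_extendFromProjectives β⟩

end NatTrans

end CategoryTheory

theorem whisker_with_exact_fully_faithful_on_projectives_bijective_general
    {C₁ : Type*} [Category C₁] [Abelian C₁] [EnoughProjectives C₁]
    {C₂ : Type*} [Category C₂] [Abelian C₂]
    {D : Type*} [Category D]
    (Z : C₂ ⥤ D) [PreservesFiniteColimits Z]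
    (hZ : ∀ P Q : C₂, Projective P → Projective Q →
      Function.Bijective (fun f : P ⟶ Q => Z.map f))
    (K L : C₁ ⥤ C₂) [K.Additive] [L.Additive]
    [PreservesFiniteColimits K]
    (hK : ∀ X : C₁, Projective X → Projective (K.obj X))
    (hL : ∀ X : C₁, Projective X → Projective (L.obj X)) :
    Function.Bijective (fun f : K ⟶ L => Functor.whiskerRight f Z) := by
  let ι := (isProjective C₁).ι
  have restrict_bijective : Function.Bijective (fun f : K ⟶ L => Functor.whiskerLeft ι f) :=
    ⟨NatTrans.whiskerLeft_isProjective_ι_injective,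
      NatTrans.whiskerLeft_isProjective_ι_surjective⟩
  have restrict_injective :
      Function.Injective (fun f : K ⋙ Z ⟶ L ⋙ Z => Functor.whiskerLeft ι f) :=
    NatTrans.whiskerLeft_isProjective_ι_injective
  have whiskerRight_bijective :
      Function.Bijective (fun f : ι ⋙ K ⟶ ι ⋙ L => Functor.whiskerRight f Z) :=
    Functor.whiskerRight_bijective_of_map_bijective Z
      fun P Q => hZ _ _ (hK _ P.property) (hL _ Q.property)
  exact Function.Bijective.of_comp_left (whiskerRight_bijective.comp restrict_bijective)
    restrict_injective

/-- Let `C₁`, `C₂` and `D` be abelian categories, where `C₁` and `C₂`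
have enough projectives.  Let `Z : C₂ ⥤ D` be an exact functor whose restriction to the
full subcategory of projective objects of `C₂` is fully faithful.  Let `K, L : C₁ ⥤ C₂`
be right exact functors (additive, preserving finite colimits) mapping projective objects
to projective objects.  Then the map `Hom(K, L) → Hom(Z ∘ K, Z ∘ L)`, sending a natural
transformation `f` to the whiskered transformation `1_Z f`, is a bijection. -/
theorem whisker_with_exact_fully_faithful_on_projectives_bijective
    {C₁ : Type*} [Category C₁] [Abelian C₁] [EnoughProjectives C₁]
    {C₂ : Type*} [Category C₂] [Abelian C₂] [EnoughProjectives C₂]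
    {D : Type*} [Category D] [Abelian D]
    (Z : C₂ ⥤ D) [Z.Additive] [PreservesFiniteLimits Z] [PreservesFiniteColimits Z]
    (hZ : ∀ P Q : C₂, Projective P → Projective Q →
      Function.Bijective (fun f : P ⟶ Q => Z.map f))
    (K L : C₁ ⥤ C₂) [K.Additive] [L.Additive]
    [PreservesFiniteColimits K] [PreservesFiniteColimits L]
    (hK : ∀ X : C₁, Projective X → Projective (K.obj X))
    (hL : ∀ X : C₁, Projective X → Projective (L.obj X)) :
    Function.Bijective (fun f : K ⟶ L => Functor.whiskerRight f Z) :=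
  whisker_with_exact_fully_faithful_on_projectives_bijective_general Z hZ K L hK hL
end

section
/- Let V be a vector space over ℂ, let I be a set, and let (e_i)_{i∈I} be a family of locally nilpotent linear endomorphisms of V. For v ∈ V with v ≠ 0 set l_i(v) = max{ l ∈ ℕ : e_i^l(v) ≠ 0 }, set l_i(0) = −∞, and for l ≥ 0 let V_i^{<l} = { v ∈ V : l_i(v) < l } (a linear subspace of V). Let B ⊆ V be a basis of V equipped with maps ẽ_i, f̃_i : B → B ⊔ {0} for each i ∈ I such that: (i) for b, b′ ∈ B one has f̃_i(b) = b′ if and only if ẽ_i(b′) = b; (ii) ẽ_i(b) ≠ 0 if and only if e_i(b) ≠ 0; (iii) if e_i(b) ≠ 0 then e_i(b) ∈ ℂ^× · ẽ_i(b) + V_i^{< l_i(b) − 1}, i.e. there exist a nonzero scalar c and an element w with l_i(w) < l_i(b) − 1 such that e_i(b) = c·ẽ_i(b) + w. Then the set B⁺ = { b ∈ B : e_i(b) = 0 for all i ∈ I } is a basis of the subspace V⁺ = { v ∈ V : e_i(v) = 0 for all i ∈ I }. -/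
/-!
Fix `i` and write `f = e_i`, `l = l_i`. Condition (iii) forces `l (ẽ b) = l b - 1`, so the
`N`-fold iterate of `ẽ` sends each basis vector `b` with `l b = N` to a basis vector `b'` with
`f ^ N b ∈ ℂ^× b'`, and by (i) these `b'` are distinct. If `v = ∑ a_b b` and `N` is the largest
`l b` over the support of `v`, the coordinates of `f ^ N v` at these `b'` are the `a_b` times
nonzero scalars, so `f ^ N v ≠ 0`. Hence `ker f` is spanned by the basis vectors it contains,
and intersecting over `i` gives `V⁺ = span B⁺`.
-/

open Set

namespace Module.End

section Semiring

variable {R M : Type*} [Semiring R] [AddCommMonoid M] [Module R M]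

def IsLocallyNilpotent (f : Module.End R M) : Prop :=
  ∀ v : M, ∃ l : ℕ, (f ^ l) v = 0

/-- The paper's `l(v)`, except that `v = 0` gets `0` instead of `-∞`. -/
noncomputable def maxNonzeroPow (f : Module.End R M) (v : M) : ℕ :=
  sSup {l : ℕ | (f ^ l) v ≠ 0}

variable {f : Module.End R M} {v : M}

theorem maxNonzeroPow_eq_of_pow_apply {n : ℕ} (hn : (f ^ n) v ≠ 0)
    (hn' : (f ^ (n + 1)) v = 0) : maxNonzeroPow f v = n :=
  IsGreatest.csSup_eq ⟨hn, fun _ hl => not_lt.1 fun h => hl (pow_map_zero_of_le h hn')⟩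

theorem IsLocallyNilpotent.bddAbove (hf : IsLocallyNilpotent f) (v : M) :
    BddAbove {l : ℕ | (f ^ l) v ≠ 0} := by
  obtain ⟨l, hl⟩ := hf v
  exact ⟨l, fun k hk => not_lt.1 fun h => hk (pow_map_zero_of_le h.le hl)⟩

theorem IsLocallyNilpotent.le_maxNonzeroPow (hf : IsLocallyNilpotent f) {k : ℕ}
    (hk : (f ^ k) v ≠ 0) : k ≤ maxNonzeroPow f v :=
  le_csSup (hf.bddAbove v) hk

theorem IsLocallyNilpotent.pow_apply_eq_zero_of_maxNonzeroPow_lt (hf : IsLocallyNilpotent f)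
    {k : ℕ} (hk : maxNonzeroPow f v < k) : (f ^ k) v = 0 :=
  not_not.1 fun h => hk.not_ge (hf.le_maxNonzeroPow h)

theorem IsLocallyNilpotent.pow_maxNonzeroPow_apply_ne_zero (hf : IsLocallyNilpotent f)
    (hv : v ≠ 0) : (f ^ maxNonzeroPow f v) v ≠ 0 :=
  Nat.sSup_mem ⟨0, by simpa using hv⟩ (hf.bddAbove v)

theorem IsLocallyNilpotent.one_le_maxNonzeroPow_iff (hf : IsLocallyNilpotent f) (hv : v ≠ 0) :
    1 ≤ maxNonzeroPow f v ↔ f v ≠ 0 :=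
  ⟨fun h hfv => hf.pow_maxNonzeroPow_apply_ne_zero hv (pow_map_zero_of_le h (by simpa using hfv)),
    fun hfv => hf.le_maxNonzeroPow (by simpa using hfv)⟩

end Semiring

variable {K V ι : Type*} [DivisionRing K] [AddCommMonoid V] [Module K V] {f : Module.End K V}

theorem IsLocallyNilpotent.maxNonzeroPow_eq_of_apply_eq_smul_add (hf : IsLocallyNilpotent f)
    {u x w : V} {c : K} (hc : c ≠ 0) (hu : f u ≠ 0) (hw : (f ^ (maxNonzeroPow f u - 1)) w = 0)
    (h : f u = c • x + w) : maxNonzeroPow f x = maxNonzeroPow f u - 1 := by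
  have hu0 : u ≠ 0 := fun hu0 => hu (by rw [hu0, map_zero])
  obtain ⟨m, hm⟩ := Nat.exists_eq_add_of_le' ((hf.one_le_maxNonzeroPow_iff hu0).2 hu)
  rw [hm, Nat.add_sub_cancel] at hw ⊢
  have hpow (k : ℕ) : (f ^ (k + 1)) u = c • (f ^ k) x + (f ^ k) w := by
    rw [pow_succ, mul_apply, h, map_add, map_smul]
  apply maxNonzeroPow_eq_of_pow_apply
  · intro hx
    apply hf.pow_maxNonzeroPow_apply_ne_zero hu0
    rw [hm, hpow, hx, hw, smul_zero, add_zero]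
  · have hvanish := hf.pow_apply_eq_zero_of_maxNonzeroPow_lt (v := u) (k := m + 2) (by omega)
    rw [hpow, pow_map_zero_of_le m.le_succ hw, add_zero] at hvanish
    exact (smul_eq_zero.1 hvanish).resolve_left hc

/-- Condition (iii) of a perfect basis, with `ẽ` read as a self-map `σ` of the index set. -/
def IsLowering (f : Module.End K V) (b : Basis ι K V) (σ : ι → ι) : Prop :=
  ∀ j, f (b j) ≠ 0 → ∃ c : K, c ≠ 0 ∧ ∃ w : V,
    (f ^ (maxNonzeroPow f (b j) - 1)) w = 0 ∧ f (b j) = c • b (σ j) + w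

variable {b : Basis ι K V} {σ : ι → ι}

theorem IsLowering.pow_apply_eq_smul_add (hf : IsLocallyNilpotent f) (hσ : IsLowering f b σ)
    {k : ℕ} {j : ι} (hk : k ≤ maxNonzeroPow f (b j)) :
    maxNonzeroPow f (b (σ^[k] j)) = maxNonzeroPow f (b j) - k ∧
      ∃ c : K, c ≠ 0 ∧ ∃ w : V, (f ^ (maxNonzeroPow f (b j) - k)) w = 0 ∧
        (f ^ k) (b j) = c • b (σ^[k] j) + w := by
  induction k with
  | zero => exact ⟨rfl, 1, one_ne_zero, 0, map_zero _, by simp⟩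
  | succ k ih =>
    obtain ⟨hL, c, hc, w, hw, heq⟩ := ih (by omega)
    have hfj : f (b (σ^[k] j)) ≠ 0 :=
      (hf.one_le_maxNonzeroPow_iff (b.ne_zero _)).1 (by omega)
    obtain ⟨c', hc', w', hw', heq'⟩ := hσ _ hfj
    have hL' := hf.maxNonzeroPow_eq_of_apply_eq_smul_add hc' hfj hw' heq'
    rw [hL, Nat.sub_sub] at hw'
    refine ⟨by rw [Function.iterate_succ_apply', hL', hL, Nat.sub_sub],
      c * c', mul_ne_zero hc hc', c • w' + f w, ?_, ?_⟩
    · rw [map_add, map_smul, hw', smul_zero, zero_add, ← mul_apply, ← pow_succ,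
        show maxNonzeroPow f (b j) - (k + 1) + 1 = maxNonzeroPow f (b j) - k by omega, hw]
    · rw [pow_succ', mul_apply, heq, map_add, map_smul, heq', Function.iterate_succ_apply',
        smul_add, smul_smul, add_assoc]

theorem IsLowering.injOn_iterate (hf : IsLocallyNilpotent f) (hσ : IsLowering f b σ)
    (hinj : InjOn σ {j | f (b j) ≠ 0}) (k : ℕ) :
    InjOn σ^[k] {j | k ≤ maxNonzeroPow f (b j)} := by
  induction k with
  | zero => exact injOn_id _
  | succ k ih =>
    rw [Function.iterate_succ']
    refine hinj.comp (ih.mono fun j (hj : k + 1 ≤ _) => show k ≤ _ by omega)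
      fun j (hj : k + 1 ≤ _) => ?_
    have hL := (hσ.pow_apply_eq_smul_add hf (k := k) (j := j) (by omega)).1
    exact (hf.one_le_maxNonzeroPow_iff (b.ne_zero _)).1 (by omega)

/-- With `N` the largest `maxNonzeroPow` over the support of `v`, the injective `σ^[N]` sends the
basis vectors where it is attained to distinct basis vectors, so they cannot cancel in `f ^ N v`. -/
theorem IsLowering.pow_sup_apply_ne_zero (hf : IsLocallyNilpotent f) (hσ : IsLowering f b σ)
    (hinj : InjOn σ {j | f (b j) ≠ 0}) {v : V} (hv : v ≠ 0) :
    (f ^ (b.repr v).support.sup fun j => maxNonzeroPow f (b j)) v ≠ 0 := by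
  set S := (b.repr v).support
  set N := S.sup fun j => maxNonzeroPow f (b j)
  have hS : S.Nonempty := Finsupp.support_nonempty_iff.2 (b.repr.map_ne_zero_iff.2 hv)
  obtain ⟨j₀, hj₀S, hj₀N⟩ : ∃ j₀ ∈ S, N = maxNonzeroPow f (b j₀) :=
    Finset.exists_mem_eq_sup S hS _
  have htop (j : ι) (hj : maxNonzeroPow f (b j) = N) :
      ∃ c : K, c ≠ 0 ∧ (f ^ N) (b j) = c • b (σ^[N] j) := by
    obtain ⟨-, c, hc, w, hw, heq⟩ := hσ.pow_apply_eq_smul_add hf (k := N) (j := j) hj.ge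
    rw [hj, Nat.sub_self, pow_zero, one_apply] at hw
    exact ⟨c, hc, by rw [heq, hw, add_zero]⟩
  obtain ⟨c₀, hc₀, hj₀⟩ := htop j₀ hj₀N.symm
  have hexp : (f ^ N) v = ∑ j ∈ S, b.repr v j • (f ^ N) (b j) := by
    conv_lhs => rw [← b.linearCombination_repr v]
    simp only [Finsupp.linearCombination_apply, Finsupp.sum, map_sum, map_smul, S]
  have hcoord : b.repr ((f ^ N) v) (σ^[N] j₀) = b.repr v j₀ * c₀ := by
    rw [hexp, map_sum, Finsupp.finsetSum_apply, Finset.sum_eq_single_of_mem j₀ hj₀S]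
    · simp [hj₀]
    intro j hjS hne
    have hjN : maxNonzeroPow f (b j) ≤ N :=
      Finset.le_sup (f := fun j => maxNonzeroPow f (b j)) hjS
    obtain hlt | hN := hjN.lt_or_eq
    · simp [hf.pow_apply_eq_zero_of_maxNonzeroPow_lt hlt]
    obtain ⟨c, -, hj⟩ := htop j hN
    have hσne : σ^[N] j ≠ σ^[N] j₀ := fun h =>
      hne (hσ.injOn_iterate hf hinj N (show N ≤ _ from hN.ge) (show N ≤ _ from hj₀N.le) h)
    simp [hj, hσne.symm]
  intro h
  rw [h, map_zero, Finsupp.zero_apply] at hcoord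
  exact mul_ne_zero (Finsupp.mem_support_iff.1 hj₀S) hc₀ hcoord.symm

theorem IsLowering.ker_eq_span_image (hf : IsLocallyNilpotent f) (hσ : IsLowering f b σ)
    (hinj : InjOn σ {j | f (b j) ≠ 0}) :
    LinearMap.ker f = Submodule.span K (b '' {j | f (b j) = 0}) := by
  refine le_antisymm (fun v hv => ?_) (Submodule.span_le.2 ?_)
  · rw [b.mem_span_image]
    intro j hj
    by_contra hfj
    have hv0 : v ≠ 0 := fun h => by simp [h] at hj
    have hN : 1 ≤ (b.repr v).support.sup fun j => maxNonzeroPow f (b j) :=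
      ((hf.one_le_maxNonzeroPow_iff (b.ne_zero j)).2 hfj).trans
        (Finset.le_sup (f := fun j => maxNonzeroPow f (b j)) hj)
    apply hσ.pow_sup_apply_ne_zero hf hinj hv0
    rw [← Nat.sub_add_cancel hN, pow_succ, mul_apply, LinearMap.mem_ker.1 hv, map_zero]
  · rintro _ ⟨j, hj, rfl⟩
    exact hj

end Module.End

theorem Module.Basis.iInf_span_image {R M ι I : Type*} [Semiring R] [AddCommMonoid M]
    [Module R M] (b : Basis ι R M) (s : I → Set ι) :
    ⨅ i, Submodule.span R (b '' s i) = Submodule.span R (b '' ⋂ i, s i) := by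
  ext v
  simp only [Submodule.mem_iInf, b.mem_span_image, subset_iInter_iff]

theorem perfect_basis_primitive_elements_basis_of_primitive_vectors_general
    {V : Type*} [AddCommGroup V] [Module ℂ V] {I : Type*}
    (e : I → Module.End ℂ V)
    (hnil : ∀ (i : I) (v : V), ∃ l : ℕ, (e i ^ l) v = 0)
    {ι : Type*} (b : Module.Basis ι ℂ V)
    (etilde ftilde : I → ι → Option ι)
    (h1 : ∀ (i : I) (j j' : ι), ftilde i j = some j' ↔ etilde i j' = some j)
    (h3 : ∀ (i : I) (j : ι), e i (b j) ≠ 0 →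
      ∃ j' : ι, etilde i j = some j' ∧ ∃ c : ℂ, c ≠ 0 ∧ ∃ w : V,
        (e i ^ (sSup {l : ℕ | (e i ^ l) (b j) ≠ 0} - 1)) w = 0 ∧
        e i (b j) = c • b j' + w) :
    LinearIndependent ℂ
      ((↑) : {v : V | v ∈ Set.range ⇑b ∧ ∀ i : I, e i v = 0} → V) ∧
    Submodule.span ℂ {v : V | v ∈ Set.range ⇑b ∧ ∀ i : I, e i v = 0}
      = ⨅ i : I, LinearMap.ker (e i) := by
  set σ : I → ι → ι := fun i j => (etilde i j).getD j
  have hσ_eq {i : I} {j : ι} (hj : e i (b j) ≠ 0) : etilde i j = some (σ i j) := by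
    obtain ⟨j', hj', -⟩ := h3 i j hj
    simp [σ, hj']
  have hσ (i : I) : Module.End.IsLowering (e i) b (σ i) := fun j hj => by
    obtain ⟨j', hj', hrest⟩ := h3 i j hj
    rw [show σ i j = j' by simp [σ, hj']]
    exact hrest
  have hinj (i : I) : InjOn (σ i) {j | e i (b j) ≠ 0} := fun j₁ hj₁ j₂ hj₂ h =>
    Option.some.inj <| ((h1 i _ _).2 (hσ_eq hj₁)).symm.trans ((h1 i _ _).2 (h ▸ hσ_eq hj₂))
  have hprimitive : {v : V | v ∈ Set.range ⇑b ∧ ∀ i : I, e i v = 0} =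
      b '' ⋂ i, {j | e i (b j) = 0} := by
    ext v
    constructor
    · rintro ⟨⟨j, rfl⟩, hj⟩
      exact ⟨j, mem_iInter.2 hj, rfl⟩
    · rintro ⟨j, hj, rfl⟩
      exact ⟨⟨j, rfl⟩, fun i => mem_iInter.1 hj i⟩
  refine ⟨b.linearIndependent.linearIndepOn_id.mono fun v hv => hv.1, ?_⟩
  simp_rw [hprimitive, ← b.iInf_span_image, (hσ _).ker_eq_span_image (hnil _) (hinj _)]

/-- perfect bases, Berenstein–Kazhdan / Lemma `basis` of the paper.
Let `V` be a `ℂ`-vector space and `(e i)_{i ∈ I}` a family of locally nilpotent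
endomorphisms of `V`.  For `v ≠ 0` set `l_i(v) = max { l | e_i^l v ≠ 0 }` (here realised
as `sSup {l | (e i ^ l) v ≠ 0}`), `l_i(0) = -∞`, and `V_i^{<l} = { v | l_i(v) < l }`;
note that `V_i^{<l} = ker (e_i ^ l)`, which is how membership in `V_i^{<l}` is expressed
below.  Let `b : ι → V` be a basis equipped with maps `ẽ_i, f̃_i : B → B ⊔ {0}`
(encoded as `etilde ftilde : I → ι → Option ι`) such that
(i) `f̃_i b = b'` iff `ẽ_i b' = b`;
(ii) `ẽ_i b ≠ 0` iff `e_i b ≠ 0`;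
(iii) if `e_i b ≠ 0` then `e_i b ∈ ℂ* ẽ_i b + V_i^{< l_i(b) - 1}`.
Then `B⁺ = { b ∈ B | e_i b = 0 for all i }` is a basis of the subspace
`V⁺ = { v | e_i v = 0 for all i } = ⨅ i, ker (e i)`: it is linearly independent and its
span is `V⁺`. -/
theorem perfect_basis_primitive_elements_basis_of_primitive_vectors
    {V : Type*} [AddCommGroup V] [Module ℂ V] {I : Type*}
    (e : I → Module.End ℂ V)
    (hnil : ∀ (i : I) (v : V), ∃ l : ℕ, (e i ^ l) v = 0)
    {ι : Type*} (b : Module.Basis ι ℂ V)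
    (etilde ftilde : I → ι → Option ι)
    (h1 : ∀ (i : I) (j j' : ι), ftilde i j = some j' ↔ etilde i j' = some j)
    (h2 : ∀ (i : I) (j : ι), etilde i j ≠ none ↔ e i (b j) ≠ 0)
    (h3 : ∀ (i : I) (j : ι), e i (b j) ≠ 0 →
      ∃ j' : ι, etilde i j = some j' ∧ ∃ c : ℂ, c ≠ 0 ∧ ∃ w : V,
        (e i ^ (sSup {l : ℕ | (e i ^ l) (b j) ≠ 0} - 1)) w = 0 ∧
        e i (b j) = c • b j' + w) :
    LinearIndependent ℂ
      ((↑) : {v : V | v ∈ Set.range ⇑b ∧ ∀ i : I, e i v = 0} → V) ∧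
    Submodule.span ℂ {v : V | v ∈ Set.range ⇑b ∧ ∀ i : I, e i v = 0}
      = ⨅ i : I, LinearMap.ker (e i) :=
  perfect_basis_primitive_elements_basis_of_primitive_vectors_general e hnil b etilde ftilde h1 h3
end

section
/- Let B be a finite-dimensional ℂ-algebra and let A ⊆ B be a subalgebra. Assume that both A and B are symmetric algebras. Consider Hom_A(B, A), the space of left A-module homomorphisms from B to A, as a (B, A)-bimodule via (b·f)(x) = f(xb) and (f·a)(x) = f(x)a for b, x ∈ B, a ∈ A. Then Hom_A(B, A) is isomorphic to B as a (B, A)-bimodule, where B is a (B, A)-bimodule by left multiplication by B and right multiplication by A. -/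
/-- A finite-dimensional `ℂ`-algebra `R` is *symmetric* if it admits a `ℂ`-linear form
`lam : R → ℂ` with `lam (x * y) = lam (y * x)` for all `x, y`, whose associated bilinear
form `(x, y) ↦ lam (x * y)` is nondegenerate (equivalently, `R ≅ Hom_ℂ(R, ℂ)` as
`(R, R)`-bimodules). -/
def IsSymmetricCAlgebra (R : Type*) [Ring R] [Algebra ℂ R] : Prop :=
  ∃ lam : R →ₗ[ℂ] ℂ, (∀ x y : R, lam (x * y) = lam (y * x)) ∧
    ∀ x : R, (∀ y : R, lam (x * y) = 0) → x = 0

/-- For a subalgebra `A` of `B`, right multiplication `x ↦ x * b` by an element `b : B`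
is a homomorphism of left `A`-modules `B → B`. -/
def mulRightLin {B : Type*} [Ring B] [Algebra ℂ B] (A : Subalgebra ℂ B) (b : B) :
    B →ₗ[A] B where
  toFun x := x * b
  map_add' x y := add_mul x y b
  map_smul' a x := smul_mul_assoc a x b

/-! A nondegenerate trace form `λ_A` on `A` identifies `Hom_A(B, A)` with `Hom_ℂ(B, ℂ)` through
`f ↦ λ_A ∘ f`: the inverse sends `g` to the map `x ↦ c_x`, where `c_x ∈ A` is determined by
`λ_A (a * c_x) = g (a • x)` for all `a ∈ A`. A nondegenerate trace form `λ_B` identifies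
`Hom_ℂ(B, ℂ)` with `B` through `b ↦ λ_B (· * b)`. The composite `φ` is characterised by
`λ_B (x * φ f) = λ_A (f x)`, and the compatibility with both actions follows from associativity
together with the symmetry of `λ_A` (for the right `A`-action) and of `λ_B`. -/

namespace Module.Dual

section MulForm

variable {K R : Type*} [Field K] [Ring R] [Algebra K R]

def mulForm (lam : Dual K R) : LinearMap.BilinForm K R :=
  (LinearMap.mul K R).compr₂ lam

@[simp]
theorem mulForm_apply (lam : Dual K R) (x y : R) : lam.mulForm x y = lam (x * y) :=
  rfl

theorem mulForm_nondegenerate {lam : Dual K R} (hsymm : ∀ x y : R, lam (x * y) = lam (y * x))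
    (hsep : ∀ x : R, (∀ y : R, lam (x * y) = 0) → x = 0) : lam.mulForm.Nondegenerate :=
  ⟨hsep, fun y hy => hsep y fun x => by rw [hsymm]; exact hy x⟩

theorem eq_of_forall_apply_mul_eq {lam : Dual K R} (hlam : lam.mulForm.Nondegenerate) {b b' : R}
    (h : ∀ x : R, lam (x * b) = lam (x * b')) : b = b' :=
  sub_eq_zero.mp <| hlam.2 _ fun x => by simp [mul_sub, h]

variable [FiniteDimensional K R]

noncomputable def mulFormEquivDual {lam : Dual K R} (hlam : lam.mulForm.Nondegenerate) :
    R ≃ₗ[K] Dual K R :=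
  lam.mulForm.flip.toDual hlam.flip

@[simp]
theorem apply_mul_mulFormEquivDual_symm {lam : Dual K R} (hlam : lam.mulForm.Nondegenerate)
    (g : Dual K R) (x : R) : lam (x * (mulFormEquivDual hlam).symm g) = g x :=
  LinearMap.BilinForm.apply_toDual_symm_apply (hB := hlam.flip) g x

end MulForm

section HomToDual

variable {K A M : Type*} [Field K] [Ring A] [Algebra K A]
  [AddCommMonoid M] [Module A M] [Module K M] [IsScalarTower K A M] {lam : Dual K A}

variable (M) in
def homToDual (lam : Dual K A) : (M →ₗ[A] A) →ₗ[K] Dual K M :=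
  LinearMap.llcomp K M A K lam ∘ₗ LinearMap.restrictScalarsₗ K A M A K

@[simp]
theorem homToDual_apply (lam : Dual K A) (f : M →ₗ[A] A) (m : M) :
    lam.homToDual M f m = lam (f m) :=
  rfl

theorem homToDual_injective (hlam : lam.mulForm.Nondegenerate) :
    Function.Injective (lam.homToDual M) := by
  refine (injective_iff_map_eq_zero _).2 fun f hf => LinearMap.ext fun m => ?_
  refine hlam.2 (f m) fun a => ?_
  rw [mulForm_apply, ← smul_eq_mul, ← map_smul]
  exact LinearMap.congr_fun hf (a • m)

variable [FiniteDimensional K A]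

noncomputable def homOfDual (hlam : lam.mulForm.Nondegenerate) (g : Dual K M) : M →ₗ[A] A where
  toFun m :=
    (mulFormEquivDual hlam).symm (g ∘ₗ (LinearMap.toSpanSingleton A M m).restrictScalars K)
  map_add' m m' := by
    rw [← map_add]
    congr 1
    ext a
    simp [smul_add]
  map_smul' a m := eq_of_forall_apply_mul_eq hlam fun a' => by
    simp [← mul_assoc, mul_smul]

theorem apply_mul_homOfDual (hlam : lam.mulForm.Nondegenerate) (g : Dual K M) (a : A) (m : M) :
    lam (a * homOfDual hlam g m) = g (a • m) :=
  apply_mul_mulFormEquivDual_symm hlam _ a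

theorem homToDual_homOfDual (hlam : lam.mulForm.Nondegenerate) (g : Dual K M) :
    lam.homToDual M (homOfDual hlam g) = g := by
  ext m
  simpa using apply_mul_homOfDual hlam g 1 m

theorem homToDual_surjective (hlam : lam.mulForm.Nondegenerate) :
    Function.Surjective (lam.homToDual M) :=
  fun g => ⟨homOfDual hlam g, homToDual_homOfDual hlam g⟩

variable (M) in
noncomputable def homEquivDual (hlam : lam.mulForm.Nondegenerate) :
    (M →ₗ[A] A) ≃ₗ[K] Dual K M :=
  .ofBijective (lam.homToDual M) ⟨homToDual_injective hlam, homToDual_surjective hlam⟩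

@[simp]
theorem homEquivDual_apply (hlam : lam.mulForm.Nondegenerate) (f : M →ₗ[A] A) (m : M) :
    homEquivDual M hlam f m = lam (f m) :=
  rfl

end HomToDual

end Module.Dual

/-- Let `B` be a finite-dimensional `ℂ`-algebra and `A ⊆ B` a
subalgebra, both symmetric algebras.  Consider `Hom_A(B, A)`, the space of left
`A`-module homomorphisms `B → A`, as a `(B, A)`-bimodule via `(b • f) x = f (x * b)`
and `(f • a) x = f x * a`.  Then `Hom_A(B, A)` is isomorphic to `B` as a
`(B, A)`-bimodule, where `B` carries left multiplication by `B` and right multiplication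
by `A`.  The bimodule isomorphism is expressed as an additive equivalence `φ`
intertwining the two actions; note that `b • f = f ∘ₗ mulRightLin A b` and
`f • a = (LinearMap.toSpanSingleton A A a) ∘ₗ f` (the latter is `x ↦ f x * a`, since
`LinearMap.toSpanSingleton A A a` is `r ↦ r • a = r * a`). -/
theorem homDual_iso_self_of_symmetric
    {B : Type*} [Ring B] [Algebra ℂ B] [FiniteDimensional ℂ B]
    (A : Subalgebra ℂ B)
    (hA : IsSymmetricCAlgebra A) (hB : IsSymmetricCAlgebra B) :
    ∃ φ : (B →ₗ[A] A) ≃+ B,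
      (∀ (b : B) (f : B →ₗ[A] A),
        φ (f ∘ₗ mulRightLin A b) = b * φ f) ∧
      (∀ (a : A) (f : B →ₗ[A] A),
        φ ((LinearMap.toSpanSingleton A A a) ∘ₗ f) = φ f * (a : B)) := by
  obtain ⟨lamA, symmA, sepA⟩ := hA
  obtain ⟨lamB, symmB, sepB⟩ := hB
  have ndA := Module.Dual.mulForm_nondegenerate symmA sepA
  have ndB := Module.Dual.mulForm_nondegenerate symmB sepB
  let φ : (B →ₗ[A] A) ≃+ B :=
    ((Module.Dual.homEquivDual B ndA).trans (Module.Dual.mulFormEquivDual ndB).symm).toAddEquiv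
  have hφ : ∀ f x, lamB (x * φ f) = lamA (f x) := fun f x => by simp [φ]
  refine ⟨φ, fun b f => Module.Dual.eq_of_forall_apply_mul_eq ndB fun x => ?_,
    fun a f => Module.Dual.eq_of_forall_apply_mul_eq ndB fun x => ?_⟩
  · rw [hφ, ← mul_assoc, hφ]
    rfl
  · calc lamB (x * φ (LinearMap.toSpanSingleton A A a ∘ₗ f)) = lamA (f x * a) := by simp [hφ]
      _ = lamA (f (a • x)) := by rw [symmA, map_smul, smul_eq_mul]
      _ = lamB (a * (x * φ f)) := by rw [← mul_assoc, hφ]; rfl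
      _ = lamB (x * (φ f * a)) := by rw [symmB, mul_assoc]
end

section
/- Let B be a finite-dimensional ℂ-algebra and let A ⊆ B be a subalgebra such that B is free as a left A-module. Assume that both A and B are symmetric algebras. Then the induction functor B ⊗_A (−) and the coinduction functor Hom_A(B, −) from the category of (finitely generated) left A-modules to the category of (finitely generated) left B-modules are isomorphic. In particular, induction B ⊗_A (−) is both left and right adjoint to the restriction functor from B-modules to A-modules. -/
set_option linter.unusedSectionVars false
set_option maxHeartbeats 1000000


open CategoryTheory

/-- Type synonym for `Hom_A(B, M) = B →ₗ[A] M`, regarded as a left `B`-module via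
`(b • f) x = f (x * b)`. -/
@[nolint unusedArguments]
def CoindModule {B : Type} [Ring B] [Algebra ℂ B] (A : Subalgebra ℂ B)
    (M : Type) [AddCommGroup M] [Module A M] : Type :=
  B →ₗ[A] M

instance {B : Type} [Ring B] [Algebra ℂ B] (A : Subalgebra ℂ B)
    (M : Type) [AddCommGroup M] [Module A M] : AddCommGroup (CoindModule A M) :=
  inferInstanceAs (AddCommGroup (B →ₗ[A] M))

instance {B : Type} [Ring B] [Algebra ℂ B] (A : Subalgebra ℂ B)
    (M : Type) [AddCommGroup M] [Module A M] : Module B (CoindModule A M) where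
  smul b f := LinearMap.comp (f : B →ₗ[A] M) (mulRightLin A b)
  one_smul f := by
    show LinearMap.comp (f : B →ₗ[A] M) (mulRightLin A 1) = (f : B →ₗ[A] M)
    ext x
    change DFunLike.coe (F := B →ₗ[A] M) f (x * 1) = DFunLike.coe (F := B →ₗ[A] M) f x
    rw [mul_one]
  mul_smul b b' f := by
    show LinearMap.comp (f : B →ₗ[A] M) (mulRightLin A (b * b'))
      = LinearMap.comp (LinearMap.comp (f : B →ₗ[A] M) (mulRightLin A b'))
          (mulRightLin A b)
    ext x
    change DFunLike.coe (F := B →ₗ[A] M) f (x * (b * b')) = DFunLike.coe (F := B →ₗ[A] M) f (x * b * b')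
    rw [mul_assoc]
  smul_zero b := LinearMap.zero_comp _
  smul_add b f g := LinearMap.add_comp _ _ _
  add_smul b b' f := by
    show LinearMap.comp (f : B →ₗ[A] M) (mulRightLin A (b + b'))
      = LinearMap.comp (f : B →ₗ[A] M) (mulRightLin A b)
        + LinearMap.comp (f : B →ₗ[A] M) (mulRightLin A b')
    ext x
    change DFunLike.coe (F := B →ₗ[A] M) f (x * (b + b')) = DFunLike.coe (F := B →ₗ[A] M) f (x * b) + DFunLike.coe (F := B →ₗ[A] M) f (x * b')
    rw [mul_add]
    exact map_add (show B →ₗ[A] M from f) _ _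
  zero_smul f := by
    show LinearMap.comp (f : B →ₗ[A] M) (mulRightLin A 0) = 0
    ext x
    change DFunLike.coe (F := B →ₗ[A] M) f (x * 0) = 0
    rw [mul_zero]
    exact map_zero (show B →ₗ[A] M from f)

/-- The coinduction functor `M ↦ Hom_A(B, M)` from left `A`-modules to left `B`-modules,
for a subalgebra `A` of `B`; the `B`-action is `(b • f) x = f (x * b)`. -/
def coindFunctor {B : Type} [Ring B] [Algebra ℂ B] (A : Subalgebra ℂ B) :
    ModuleCat.{0} A ⥤ ModuleCat.{0} B where
  obj M := ModuleCat.of B (CoindModule A M)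
  map {M M'} g := ModuleCat.ofHom
    { toFun := fun f => LinearMap.comp (g.hom : M →ₗ[A] M') (f : B →ₗ[A] M)
      map_add' := fun f f' => LinearMap.comp_add _ _ _
      map_smul' := fun b f => (LinearMap.comp_assoc _ _ _).symm }
  map_id M := by
    apply ModuleCat.hom_ext
    apply LinearMap.ext
    intro f
    exact LinearMap.id_comp _
  map_comp g h := by
    apply ModuleCat.hom_ext
    apply LinearMap.ext
    intro f
    exact (LinearMap.comp_assoc _ _ _).symm

section DualAux
variable {R : Type} [Ring R] [Algebra ℂ R]
def toDualL (lam : R →ₗ[ℂ] ℂ) : R →ₗ[ℂ] Module.Dual ℂ R where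
  toFun b := lam ∘ₗ LinearMap.mulLeft ℂ b
  map_add' b b' := by ext x; simp [add_mul]
  map_smul' c b := by ext x; simp [smul_mul_assoc]
@[simp] lemma toDualL_apply (lam : R →ₗ[ℂ] ℂ) (b x : R) :
    toDualL lam b x = lam (b * x) := rfl
noncomputable def dualEquivOf [FiniteDimensional ℂ R] (lam : R →ₗ[ℂ] ℂ)
    (h : ∀ x : R, (∀ y : R, lam (x * y) = 0) → x = 0) : R ≃ₗ[ℂ] Module.Dual ℂ R := by
  refine LinearEquiv.ofBijective (toDualL lam) ⟨?_, ?_⟩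
  · rw [← LinearMap.ker_eq_bot, LinearMap.ker_eq_bot']
    intro x hx
    exact h x fun y => by simpa using DFunLike.congr_fun hx y
  · rw [← LinearMap.injective_iff_surjective_of_finrank_eq_finrank
      Subspace.dual_finrank_eq.symm]
    rw [← LinearMap.ker_eq_bot, LinearMap.ker_eq_bot']
    intro x hx
    exact h x fun y => by simpa using DFunLike.congr_fun hx y
@[simp] lemma dualEquivOf_apply [FiniteDimensional ℂ R] (lam : R →ₗ[ℂ] ℂ)
    (h : ∀ x : R, (∀ y : R, lam (x * y) = 0) → x = 0) (b x : R) :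
    dualEquivOf lam h b x = lam (b * x) := rfl
end DualAux

section Sym

variable {B : Type} [Ring B] [Algebra ℂ B] [FiniteDimensional ℂ B] (A : Subalgebra ℂ B)

/-- The data of symmetrizing forms on `A` and `B`. -/
structure SymData where
  lamA : ↥A →ₗ[ℂ] ℂ
  lamB : B →ₗ[ℂ] ℂ
  symA : ∀ x y : ↥A, lamA (x * y) = lamA (y * x)
  symB : ∀ x y : B, lamB (x * y) = lamB (y * x)
  nondegA : ∀ x : ↥A, (∀ y, lamA (x * y) = 0) → x = 0
  nondegB : ∀ x : B, (∀ y, lamB (x * y) = 0) → x = 0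

variable {A} (D : SymData A)

instance : Module.Finite ↥A B := Module.Finite.of_restrictScalars_finite ℂ ↥A B

/-- The functional `a ↦ lamB (b * a)` on `A`, linearly in `b`. -/
def resFunL : B →ₗ[ℂ] Module.Dual ℂ ↥A where
  toFun b := D.lamB ∘ₗ (LinearMap.mulLeft ℂ b) ∘ₗ A.val.toLinearMap
  map_add' b b' := by ext a; simp [add_mul]
  map_smul' c b := by ext a; simp [smul_mul_assoc]

/-- The projection `π : B → A` determined by `lamA (π b * a) = lamB (b * a)`. -/
noncomputable def piL : B →ₗ[ℂ] ↥A :=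
  ((dualEquivOf D.lamA D.nondegA).symm.toLinearMap) ∘ₗ resFunL D

lemma hpi (b : B) (a : ↥A) : D.lamA (piL D b * a) = D.lamB (b * ↑a) := by
  have : dualEquivOf D.lamA D.nondegA (piL D b) = resFunL D b := by
    simp [piL]
  have := DFunLike.congr_fun this a
  simpa [resFunL] using this

lemma eqA (u v : ↥A) (h : ∀ w, D.lamA (u * w) = D.lamA (v * w)) : u = v := by
  have := D.nondegA (u - v) fun w => by rw [sub_mul, map_sub, h w, sub_self]
  exact sub_eq_zero.mp this

lemma eqB (u v : B) (h : ∀ w, D.lamB (w * u) = D.lamB (w * v)) : u = v := by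
  have := D.nondegB (u - v) fun w => by
    rw [D.symB, mul_sub, map_sub, h w, sub_self]
  exact sub_eq_zero.mp this

lemma pi_left (a : ↥A) (x : B) : piL D (↑a * x) = a * piL D x := by
  refine eqA D _ _ fun w => ?_
  calc D.lamA (piL D (↑a * x) * w) = D.lamB (↑a * x * ↑w) := hpi D _ _
    _ = D.lamB (x * (↑w * ↑a)) := by
        rw [mul_assoc, D.symB (↑a) (x * ↑w), mul_assoc]
    _ = D.lamB (x * ↑(w * a)) := by rw [MulMemClass.coe_mul]
    _ = D.lamA (piL D x * (w * a)) := (hpi D _ _).symm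
    _ = D.lamA (a * piL D x * w) := by
        rw [← mul_assoc, D.symA (piL D x * w) a, ← mul_assoc]

lemma pi_right (x : B) (a : ↥A) : piL D (x * ↑a) = piL D x * a := by
  refine eqA D _ _ fun w => ?_
  calc D.lamA (piL D (x * ↑a) * w) = D.lamB (x * ↑a * ↑w) := hpi D _ _
    _ = D.lamB (x * ↑(a * w)) := by rw [MulMemClass.coe_mul, mul_assoc]
    _ = D.lamA (piL D x * (a * w)) := (hpi D _ _).symm
    _ = D.lamA (piL D x * a * w) := by rw [mul_assoc]

lemma pi_smul (a : ↥A) (x : B) : piL D (a • x) = a * piL D x := by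
  have : a • x = ↑a * x := rfl
  rw [this, pi_left]


section Basis

variable [Module.Free ↥A B]

noncomputable def bas : Module.Basis (Module.Free.ChooseBasisIndex ↥A B) ↥A B :=
  Module.Free.chooseBasis ↥A B

noncomputable instance : Fintype (Module.Free.ChooseBasisIndex ↥A B) := by infer_instance

/-- The "dual basis" elements `c i` with `lamB (c i * x) = lamA (coord i x)`. -/
noncomputable def cB (i : Module.Free.ChooseBasisIndex ↥A B) : B :=
  (dualEquivOf D.lamB D.nondegB).symm
    (D.lamA ∘ₗ (((bas (A := A)).coord i).restrictScalars ℂ))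

lemma hc (i) (x : B) : D.lamB (cB D i * x) = D.lamA ((bas (A := A)).coord i x) := by
  have : dualEquivOf D.lamB D.nondegB (cB D i)
      = D.lamA ∘ₗ (((bas (A := A)).coord i).restrictScalars ℂ) := by
    simp [cB]
  simpa using DFunLike.congr_fun this x

lemma hc' (i) (x : B) : piL D (x * cB D i) = (bas (A := A)).coord i x := by
  refine eqA D _ _ fun w => ?_
  calc D.lamA (piL D (x * cB D i) * w) = D.lamB (x * cB D i * ↑w) := hpi D _ _
    _ = D.lamB (cB D i * (↑w * x)) := by
        rw [mul_assoc, D.symB x (cB D i * ↑w), mul_assoc]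
    _ = D.lamA ((bas (A := A)).coord i (↑w * x)) := hc D _ _
    _ = D.lamA (w * (bas (A := A)).coord i x) := by
        have : (↑w : B) * x = w • x := rfl
        rw [this, map_smul]; rfl
    _ = D.lamA ((bas (A := A)).coord i x * w) := D.symA _ _

lemma star_id (y : B) : ∑ i, cB D i * ↑(piL D (bas (A := A) i * y)) = y := by
  refine eqB D _ _ fun x => ?_
  rw [Finset.mul_sum, map_sum]
  have hterm : ∀ i, D.lamB (x * (cB D i * ↑(piL D (bas (A := A) i * y))))
      = D.lamB ((↑((bas (A := A)).coord i x) * bas (A := A) i) * y) := by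
    intro i
    calc D.lamB (x * (cB D i * ↑(piL D (bas (A := A) i * y))))
        = D.lamB ((x * cB D i) * ↑(piL D (bas (A := A) i * y))) := by rw [mul_assoc]
      _ = D.lamA (piL D (x * cB D i) * piL D (bas (A := A) i * y)) := (hpi D _ _).symm
      _ = D.lamA ((bas (A := A)).coord i x * piL D (bas (A := A) i * y)) := by rw [hc']
      _ = D.lamA (piL D (bas (A := A) i * y) * (bas (A := A)).coord i x) := D.symA _ _
      _ = D.lamB ((bas (A := A) i * y) * ↑((bas (A := A)).coord i x)) := hpi D _ _
      _ = D.lamB (↑((bas (A := A)).coord i x) * (bas (A := A) i * y)) := D.symB _ _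
      _ = D.lamB ((↑((bas (A := A)).coord i x) * bas (A := A) i) * y) := by rw [mul_assoc]
  rw [Finset.sum_congr rfl fun i _ => hterm i, ← map_sum, ← Finset.sum_mul]
  congr 2
  have : ∀ i, (↑((bas (A := A)).coord i x) : B) * bas (A := A) i
      = (bas (A := A)).coord i x • bas (A := A) i := fun i => rfl
  rw [Finset.sum_congr rfl fun i _ => this i]
  simp only [Module.Basis.coord_apply]
  exact (bas (A := A)).sum_repr x

end Basis
end Sym

section Adj

variable {B : Type} [Ring B] [Algebra ℂ B] [FiniteDimensional ℂ B] {A : Subalgebra ℂ B}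

/-- View an element of `CoindModule A M` as a linear map. -/
def toLin {M : Type} [AddCommGroup M] [Module ↥A M] (f : CoindModule A M) :
    B →ₗ[A] M := f

/-- View a linear map as an element of `CoindModule A M`. -/
def ofLin {M : Type} [AddCommGroup M] [Module ↥A M] (f : B →ₗ[A] M) :
    CoindModule A M := f

lemma coind_smul_apply {M : Type} [AddCommGroup M] [Module ↥A M]
    (b : B) (f : CoindModule A M) (x : B) :
    toLin (b • f) x = toLin f (x * b) := rfl

lemma coind_add_apply {M : Type} [AddCommGroup M] [Module ↥A M]
    (f g : CoindModule A M) (x : B) :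
    toLin (f + g) x = toLin f x + toLin g x := rfl

lemma coind_ext {M : Type} [AddCommGroup M] [Module ↥A M]
    {f g : CoindModule A M} (h : ∀ x, toLin f x = toLin g x) : f = g :=
  LinearMap.ext h

/-- Evaluation at `x` as an additive monoid hom on `CoindModule`. -/
def evalCoind (M : Type) [AddCommGroup M] [Module ↥A M] (x : B) :
    CoindModule A M →+ M where
  toFun f := toLin f x
  map_zero' := rfl
  map_add' _ _ := rfl

variable (D : SymData A)

/-- `m ↦ (x ↦ π x • m)`, an element of `Hom_A(B, M)`. -/
noncomputable def theta {M : Type} [AddCommGroup M] [Module ↥A M] (m : M) :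
    CoindModule A M :=
  ofLin
    { toFun := fun x => piL D x • m
      map_add' := fun x y => by simp [add_smul]
      map_smul' := fun a x => by
        show piL D (a • x) • m = a • (piL D x • m)
        rw [pi_smul, mul_smul] }

lemma theta_apply {M : Type} [AddCommGroup M] [Module ↥A M] (m : M) (x : B) :
    toLin (theta D m) x = piL D x • m := rfl

variable [Module.Free ↥A B]

/-- The forward direction of the hom-equivalence of the adjunction `Hom_A(B,-) ⊣ Res`. -/
noncomputable def fwd {M : ModuleCat.{0} ↥A} {N : ModuleCat.{0} B}
    (h : (coindFunctor A).obj M ⟶ N) :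
    M ⟶ (ModuleCat.restrictScalars A.val.toRingHom).obj N := ModuleCat.ofHom {
  toFun m := h.hom (theta D m)
  map_add' m m' := by
    have h1 : theta D (m + m') = theta D m + theta D m' := by
      refine coind_ext fun x => ?_
      show piL D x • (m + m') = piL D x • m + piL D x • m'
      rw [smul_add]
    show h.hom (theta D (m + m')) = h.hom (theta D m) + h.hom (theta D m')
    rw [h1]; exact h.hom.map_add _ _
  map_smul' a m := by
    have h1 : theta D (a • m) = ((↑a : B) • theta D m : CoindModule A ↑M) := by
      refine coind_ext fun x => ?_
      show piL D x • (a • m) = piL D (x * ↑a) • m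
      rw [pi_right, mul_smul]
    show h.hom (theta D (a • m)) = _
    rw [h1]; exact h.hom.map_smul (↑a : B) (theta D m) }

/-- The backward direction of the hom-equivalence of the adjunction `Hom_A(B,-) ⊣ Res`. -/
noncomputable def bwd {M : ModuleCat.{0} ↥A} {N : ModuleCat.{0} B}
    (g : M ⟶ (ModuleCat.restrictScalars A.val.toRingHom).obj N) :
    (coindFunctor A).obj M ⟶ N := ModuleCat.ofHom {
  toFun f := ∑ i, cB D i • (g.hom (toLin f (bas (A := A) i)) : ↑N)
  map_add' f f' := by
    show (∑ i, cB D i • (g.hom (toLin (f + f') (bas (A := A) i)) : ↑N))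
      = (∑ i, cB D i • (g.hom (toLin f (bas (A := A) i)) : ↑N))
        + ∑ i, cB D i • (g.hom (toLin f' (bas (A := A) i)) : ↑N)
    have hadd : ∀ i, (g.hom (toLin (f + f') (bas (A := A) i)) : ↑N)
        = g.hom (toLin f (bas (A := A) i)) + g.hom (toLin f' (bas (A := A) i)) := by
      intro i
      rw [coind_add_apply, map_add]
    rw [Finset.sum_congr rfl fun i _ => by rw [hadd i, smul_add]]
    exact Finset.sum_add_distrib
  map_smul' b f := by
    show (∑ i, cB D i • (g.hom (toLin f (bas (A := A) i * b)) : ↑N))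
      = b • ∑ i, cB D i • (g.hom (toLin f (bas (A := A) i)) : ↑N)
    have expand : ∀ i, (g.hom (toLin f (bas (A := A) i * b)) : ↑N)
        = ∑ j, (↑((bas (A := A)).repr (bas (A := A) i * b) j) : B)
            • (g.hom (toLin f (bas (A := A) j)) : ↑N) := by
      intro i
      conv_lhs => rw [← (bas (A := A)).sum_repr (bas (A := A) i * b)]
      rw [map_sum, map_sum]
      refine Finset.sum_congr rfl fun j _ => ?_
      rw [map_smul, map_smul]
      rfl
    calc (∑ i, cB D i • (g.hom (toLin f (bas (A := A) i * b)) : ↑N))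
        = ∑ i, ∑ j, (cB D i * ↑((bas (A := A)).repr (bas (A := A) i * b) j))
            • (g.hom (toLin f (bas (A := A) j)) : ↑N) := by
          refine Finset.sum_congr rfl fun i _ => ?_
          rw [expand i, Finset.smul_sum]
          refine Finset.sum_congr rfl fun j _ => ?_
          rw [smul_smul]
      _ = ∑ j, (∑ i, cB D i * ↑((bas (A := A)).repr (bas (A := A) i * b) j))
            • (g.hom (toLin f (bas (A := A) j)) : ↑N) := by
          rw [Finset.sum_comm]
          exact Finset.sum_congr rfl fun j _ => (Finset.sum_smul).symm
      _ = ∑ j, (b * cB D j) • (g.hom (toLin f (bas (A := A) j)) : ↑N) := by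
          refine Finset.sum_congr rfl fun j _ => ?_
          congr 1
          have hco : ∀ i, ((bas (A := A)).repr (bas (A := A) i * b) j : ↥A)
              = piL D (bas (A := A) i * (b * cB D j)) := by
            intro i
            rw [← mul_assoc, hc']
            rfl
          rw [Finset.sum_congr rfl fun i _ => by rw [hco i]]
          exact star_id D (b * cB D j)
      _ = b • ∑ i, cB D i • (g.hom (toLin f (bas (A := A) i)) : ↑N) := by
          rw [Finset.smul_sum]
          exact Finset.sum_congr rfl fun j _ => mul_smul b (cB D j) _ }

/-- The adjunction `Hom_A(B,-) ⊣ Res` coming from the symmetric structures. -/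
noncomputable def coindResAdj :
    coindFunctor A ⊣ ModuleCat.restrictScalars A.val.toRingHom :=
  Adjunction.mkOfHomEquiv
    { homEquiv := fun M N =>
        { toFun := fwd D
          invFun := bwd D
          left_inv := fun h => by
            refine ModuleCat.hom_ext (LinearMap.ext fun f => ?_)
            show (∑ i, cB D i • h.hom (theta D (toLin f (bas (A := A) i)))) = h.hom f
            have h1 : ∀ i, cB D i • h.hom (theta D (toLin f (bas (A := A) i)))
                = h.hom (cB D i • theta D (toLin f (bas (A := A) i))) :=
              fun i => (h.hom.map_smul _ _).symm
            refine (Finset.sum_congr rfl fun i _ => h1 i).trans ((map_sum h.hom _ _).symm.trans ?_)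
            congr 1
            refine coind_ext fun x => ?_
            calc toLin (∑ i, cB D i • theta D (toLin f (bas (A := A) i))) x
                = ∑ i, toLin (cB D i • theta D (toLin f (bas (A := A) i))) x :=
                  map_sum (evalCoind ↑M x) _ _
              _ = ∑ i, ((bas (A := A)).repr x i) • toLin f (bas (A := A) i) := by
                  refine Finset.sum_congr rfl fun i _ => ?_
                  show piL D (x * cB D i) • toLin f (bas (A := A) i)
                    = (bas (A := A)).repr x i • toLin f (bas (A := A) i)
                  rw [hc', Module.Basis.coord_apply]
              _ = toLin f x := by
                  have hx : toLin f x
                      = ∑ i, (bas (A := A)).repr x i • toLin f (bas (A := A) i) := by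
                    conv_lhs => rw [← (bas (A := A)).sum_repr x]
                    rw [map_sum]
                    exact Finset.sum_congr rfl fun i _ => map_smul (toLin f) _ _
                  rw [hx]
          right_inv := fun g => by
            refine ModuleCat.hom_ext (LinearMap.ext fun m => ?_)
            show (∑ i, cB D i • (g.hom (toLin (theta D m) (bas (A := A) i)) : ↑N)) = g.hom m
            have h1 : ∀ i, (g.hom (toLin (theta D m) (bas (A := A) i)) : ↑N)
                = (↑(piL D (bas (A := A) i)) : B) • (g.hom m : ↑N) := by
              intro i
              show (g.hom (piL D (bas (A := A) i) • m) : ↑N) = _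
              rw [map_smul]
              rfl
            rw [Finset.sum_congr rfl fun i _ => by rw [h1 i]]
            have h2 : (∑ i, cB D i • ((↑(piL D (bas (A := A) i)) : B) • (g.hom m : ↑N)))
                = (∑ i, cB D i * ↑(piL D (bas (A := A) i))) • (g.hom m : ↑N) := by
              rw [Finset.sum_smul]
              exact Finset.sum_congr rfl fun i _ => smul_smul _ _ _
            rw [h2]
            have h3 : (∑ i, cB D i * (↑(piL D (bas (A := A) i)) : B)) = 1 := by
              have := star_id D (1 : B)
              simpa using this
            rw [h3, one_smul] }
      homEquiv_naturality_left_symm := fun {M' M N} f g => by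
        refine ModuleCat.hom_ext (LinearMap.ext fun φ => ?_)
        rfl
      homEquiv_naturality_right := fun {M N N'} f g => by
        refine ModuleCat.hom_ext (LinearMap.ext fun m => ?_)
        rfl }

/-- The standard adjunction `Res ⊣ Hom_A(B,-)`. -/
noncomputable def resCoindAdj' (A : Subalgebra ℂ B) :
    ModuleCat.restrictScalars A.val.toRingHom ⊣ coindFunctor A :=
  Adjunction.mkOfHomEquiv
    { homEquiv := fun N M =>
        { toFun := fun g => ModuleCat.ofHom
            ({ toFun := fun n => ofLin
                { toFun := fun x => g.hom ((x • n : ↑N))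
                  map_add' := fun x y => by
                    show g.hom (((x + y) • n : ↑N)) = g.hom ((x • n : ↑N)) + g.hom ((y • n : ↑N))
                    rw [add_smul]; exact g.hom.map_add _ _
                  map_smul' := fun a x => by
                    show g.hom (((↑a : B) * x) • n) = a • g.hom ((x • n : ↑N))
                    rw [mul_smul]
                    exact g.hom.map_smul a _ }
               map_add' := fun n n' => by
                 refine coind_ext fun x => ?_
                 show g.hom ((x • (n + n') : ↑N)) = g.hom ((x • n : ↑N)) + g.hom ((x • n' : ↑N))
                 rw [smul_add]; exact g.hom.map_add _ _
               map_smul' := fun b n => by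
                 refine coind_ext fun x => ?_
                 show g.hom ((x • (b • n) : ↑N)) = g.hom (((x * b) • n : ↑N))
                 rw [mul_smul] } : ↑N →ₗ[B] CoindModule A ↑M)
          invFun := fun h => ModuleCat.ofHom
            ({ toFun := fun n => toLin (h.hom n) 1
               map_add' := fun n n' => by
                 show toLin (h.hom (n + n')) 1 = toLin (h.hom n) 1 + toLin (h n') 1
                 exact congrArg (fun f => toLin f (1 : B)) (h.hom.map_add n n')
               map_smul' := fun a n => by
                 show toLin (h.hom ((↑a : B) • n)) 1 = _
                 refine (congrArg (fun f => toLin f (1 : B)) (h.hom.map_smul (↑a : B) n)).trans ?_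
                 show toLin (h.hom n) (1 * ↑a) = a • toLin (h.hom n) 1
                 rw [one_mul]
                 have ha : (↑a : B) = a • (1 : B) := (mul_one (↑a : B)).symm
                 rw [ha, map_smul] } :
              ↑((ModuleCat.restrictScalars A.val.toRingHom).obj N) →ₗ[↥A] ↑M)
          left_inv := fun g => by
            refine ModuleCat.hom_ext (LinearMap.ext fun n => ?_)
            show g.hom ((1 : B) • n) = g n
            rw [one_smul]
          right_inv := fun h => by
            refine ModuleCat.hom_ext (LinearMap.ext fun n => ?_)
            refine coind_ext fun x => ?_
            show toLin (h.hom (x • n)) 1 = toLin (h.hom n) x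
            rw [h.hom.map_smul]
            show toLin (h.hom n) (1 * x) = toLin (h.hom n) x
            rw [one_mul] }
      homEquiv_naturality_left_symm := fun {N' N M} f g => by
        refine ModuleCat.hom_ext (LinearMap.ext fun n => ?_)
        rfl
      homEquiv_naturality_right := fun {N M M'} f g => by
        refine ModuleCat.hom_ext (LinearMap.ext fun n => ?_)
        refine coind_ext fun x => ?_
        rfl }

end Adj

/-- Let `B` be a finite-dimensional `ℂ`-algebra, `A ⊆ B` a subalgebra
such that `B` is free as a left `A`-module, and assume both `A` and `B` are symmetric
algebras.  Then the induction functor `B ⊗_A (−)` (characterised as a left adjoint `Ind`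
of the restriction functor `Res` from `B`-modules to `A`-modules, along the inclusion
`A →+* B`) and the coinduction functor `Hom_A(B, −)` are isomorphic.  In particular,
induction is both left and right adjoint to restriction: `Res` admits a left adjoint
(namely coinduction itself), and any left adjoint `Ind` of `Res` is isomorphic to
coinduction and also satisfies `Res ⊣ Ind`. -/
theorem induction_iso_coinduction_of_symmetric
    {B : Type} [Ring B] [Algebra ℂ B] [FiniteDimensional ℂ B]
    (A : Subalgebra ℂ B) [Module.Free A B]
    (hA : IsSymmetricCAlgebra A) (hB : IsSymmetricCAlgebra B) :
    Nonempty (coindFunctor A ⊣ ModuleCat.restrictScalars A.val.toRingHom) ∧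
    ∀ Ind : ModuleCat.{0} A ⥤ ModuleCat.{0} B,
      (Ind ⊣ ModuleCat.restrictScalars A.val.toRingHom) →
        Nonempty (Ind ≅ coindFunctor A) ∧
        Nonempty (ModuleCat.restrictScalars A.val.toRingHom ⊣ Ind) := by
  obtain ⟨lamA, symA, nondegA⟩ := hA
  obtain ⟨lamB, symB, nondegB⟩ := hB
  let D : SymData A := ⟨lamA, lamB, symA, symB, nondegA, nondegB⟩
  refine ⟨⟨coindResAdj D⟩, fun Ind adjInd => ?_⟩
  have iso : Ind ≅ coindFunctor A := adjInd.leftAdjointUniq (coindResAdj D)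
  exact ⟨⟨iso⟩, ⟨(resCoindAdj' A).ofNatIsoRight iso.symm⟩⟩
end

section
/- Let O and O′ be abelian categories with enough projectives, and let H and H′ be abelian categories. Let Z : O → H and Z′ : O′ → H′ be exact functors whose restrictions to the full subcategories of projective objects are fully faithful. Let E : O → O′ and F : O′ → O be exact functors mapping projective objects to projective objects, and assume F is left adjoint to E. Let E′ : H → H′ and F′ : H′ → H be functors equipped with natural isomorphisms Z′ ∘ E ≅ E′ ∘ Z and Z ∘ F ≅ F′ ∘ Z′. If E′ is left adjoint to F′, then E is left adjoint to F; together with the assumption F ⊣ E, the pair (E, F) is then biadjoint. -/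
open CategoryTheory CategoryTheory.Limits

/-! Restricted to projective objects, `Z` and `Z'` are fully faithful and intertwine `E, F` with
`E', F'`, so `E' ⊣ F'` restricts to an adjunction between the restrictions of `E` and `F` to
projectives. Every object `X` is the cokernel of a map of projectives `d (π X)`, and right exact
functors preserve this presentation; hence a natural transformation out of a right exact functor
is determined by, and extends from, its components at projectives. The unit and counit therefore
extend to all objects, and the triangle identities, which hold at projectives, hold everywhere. -/

namespace CategoryTheory

open Projective

lemma Projective.d_comp {A : Type*} [Category A] [HasZeroMorphisms A] [EnoughProjectives A]
    {X Y : A} (f : X ⟶ Y) [HasKernel f] : d f ≫ f = 0 := by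
  unfold d syzygies
  simp

-- `(X := P)` keeps the source of `G₂.map f` syntactically `P` instead of `ι.obj ⟨P, _⟩`,
-- so that `Functor.map_id` and friends rewrite it.
lemma NatTrans.naturality_of_projective {A C : Type*} [Category A] [Category C] {G₁ G₂ : A ⥤ C}
    (τ : (isProjective A).ι ⋙ G₁ ⟶ (isProjective A).ι ⋙ G₂)
    {P Q : A} [Projective P] [Projective Q] (f : P ⟶ Q) :
    G₁.map f ≫ τ.app ⟨Q, inferInstance⟩ = τ.app ⟨P, inferInstance⟩ ≫ G₂.map (X := P) f :=
  τ.naturality (ObjectProperty.homMk (P := isProjective A) (X := ⟨P, inferInstance⟩)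
    (Y := ⟨Q, inferInstance⟩) f)

lemma NatTrans.ext_of_projective {A C : Type*} [Category A] [EnoughProjectives A] [Category C]
    {G₁ G₂ : A ⥤ C} [G₁.PreservesEpimorphisms] {α β : G₁ ⟶ G₂}
    (h : Functor.whiskerLeft (isProjective A).ι α = Functor.whiskerLeft (isProjective A).ι β) :
    α = β := by
  ext X
  rw [← cancel_epi (G₁.map (π X)), α.naturality, β.naturality]
  exact congr_arg (· ≫ G₂.map (π X)) (congr_app h ⟨Projective.over X, inferInstance⟩)

section ExtendFromProjectives

variable {A C : Type*} [Category A] [Abelian A] [EnoughProjectives A] [Category C]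
  [HasZeroMorphisms C] [HasZeroObject C]

noncomputable def Projective.isColimitMapCokernelCoforkπ (G : A ⥤ C) [PreservesFiniteColimits G]
    (X : A) :
    IsColimit (CokernelCofork.ofπ (G.map (π X))
      (by rw [← G.map_comp, d_comp, G.map_zero]) : Cofork (G.map (d (π X))) 0) :=
  isColimitCoforkMapOfIsColimit' G _ (exact_d_f (π X)).gIsCokernel

variable {G₁ G₂ : A ⥤ C} [PreservesFiniteColimits G₁] [G₂.PreservesZeroMorphisms]
  (τ : (isProjective A).ι ⋙ G₁ ⟶ (isProjective A).ι ⋙ G₂)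

noncomputable def NatTrans.extendFromProjectivesApp_s7 (X : A) : G₁.obj X ⟶ G₂.obj X :=
  Cofork.IsColimit.desc (isColimitMapCokernelCoforkπ G₁ X)
    (τ.app ⟨Projective.over X, inferInstance⟩ ≫ G₂.map (π X)) (by
      rw [zero_comp, ← Category.assoc, τ.naturality_of_projective, Category.assoc, ← G₂.map_comp,
        d_comp, G₂.map_zero, comp_zero])

lemma NatTrans.map_π_comp_extendFromProjectivesApp_s7 (X : A) :
    G₁.map (π X) ≫ τ.extendFromProjectivesApp_s7 X =
      τ.app ⟨Projective.over X, inferInstance⟩ ≫ G₂.map (π X) :=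
  Cofork.IsColimit.π_desc' (isColimitMapCokernelCoforkπ G₁ X) _ _

lemma NatTrans.map_comp_extendFromProjectivesApp_s7 {P X : A} [Projective P] (f : P ⟶ X) :
    G₁.map f ≫ τ.extendFromProjectivesApp_s7 X = τ.app ⟨P, inferInstance⟩ ≫ G₂.map (X := P) f := by
  rw [← factorThru_comp f (π X), G₁.map_comp, Category.assoc, map_π_comp_extendFromProjectivesApp_s7,
    ← Category.assoc, naturality_of_projective, Category.assoc, ← G₂.map_comp]

noncomputable def NatTrans.extendFromProjectives_s7 : G₁ ⟶ G₂ where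
  app := τ.extendFromProjectivesApp_s7
  naturality X Y f := by
    rw [← cancel_epi (G₁.map (π X)), ← G₁.map_comp_assoc, map_comp_extendFromProjectivesApp_s7,
      reassoc_of% (τ.map_π_comp_extendFromProjectivesApp_s7 X), G₂.map_comp]

lemma NatTrans.extendFromProjectives_app (P : A) [Projective P] :
    τ.extendFromProjectives_s7.app P = τ.app ⟨P, inferInstance⟩ := by
  have h := τ.map_comp_extendFromProjectivesApp_s7 (𝟙 P)
  rw [G₁.map_id, G₂.map_id, Category.id_comp] at h
  exact h.trans (Category.comp_id _)

end ExtendFromProjectives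

section Adjunction

variable {A B : Type*} [Category A] [Abelian A] [EnoughProjectives A]
  [Category B] [Abelian B] [EnoughProjectives B]

abbrev Functor.restrictProjectives (L : A ⥤ B) (hL : ∀ X, Projective X → Projective (L.obj X)) :
    (isProjective A).FullSubcategory ⥤ (isProjective B).FullSubcategory :=
  (isProjective B).lift ((isProjective A).ι ⋙ L) fun X => hL X.obj X.property

variable {L : A ⥤ B} {R : B ⥤ A} [PreservesFiniteColimits L] [PreservesFiniteColimits R]
  {hL : ∀ X, Projective X → Projective (L.obj X)} {hR : ∀ X, Projective X → Projective (R.obj X)}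

noncomputable def Adjunction.ofRestrictProjectives
    (adj : L.restrictProjectives hL ⊣ R.restrictProjectives hR) : L ⊣ R :=
  Adjunction.mkOfUnitCounit
    { unit := NatTrans.extendFromProjectives_s7
        (Functor.whiskerRight adj.unit (isProjective A).ι :
          (isProjective A).ι ⋙ 𝟭 A ⟶ (isProjective A).ι ⋙ (L ⋙ R))
      counit := NatTrans.extendFromProjectives_s7
        (Functor.whiskerRight adj.counit (isProjective B).ι :
          (isProjective B).ι ⋙ (R ⋙ L) ⟶ (isProjective B).ι ⋙ 𝟭 B)
      left_triangle := by
        apply NatTrans.ext_of_projective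
        ext ⟨P, hP⟩
        have : Projective (L.obj P) := hL P hP
        simp only [Functor.comp_obj, ObjectProperty.ι_obj, NatTrans.comp_app,
          Functor.whiskerLeft_app, Functor.whiskerRight_app, NatTrans.extendFromProjectives_app,
          ObjectProperty.ι_map, Functor.associator_hom_app, Category.id_comp, NatTrans.id_app']
        exact (isProjective B).ι.congr_map (adj.left_triangle_components ⟨P, hP⟩)
      right_triangle := by
        apply NatTrans.ext_of_projective
        ext ⟨P, hP⟩
        have : Projective (R.obj P) := hR P hP
        simp only [Functor.comp_obj, ObjectProperty.ι_obj, NatTrans.comp_app,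
          Functor.whiskerLeft_app, Functor.whiskerRight_app, NatTrans.extendFromProjectives_app,
          ObjectProperty.ι_map, Functor.associator_inv_app, Category.id_comp, NatTrans.id_app']
        exact (isProjective A).ι.congr_map (adj.right_triangle_components ⟨P, hP⟩) }

end Adjunction

lemma ObjectProperty.nonempty_fullyFaithful_ι_comp {C D : Type*} [Category C] [Category D]
    (P : ObjectProperty C) (G : C ⥤ D)
    (hG : ∀ X Y, P X → P Y → Function.Bijective (G.map : (X ⟶ Y) → _)) :
    Nonempty (P.ι ⋙ G).FullyFaithful :=
  (Functor.FullyFaithful.nonempty_iff_map_bijective _).2 fun X Y =>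
    (hG X.obj Y.obj X.property Y.property).comp (P.fullyFaithfulι.map_bijective X Y)

end CategoryTheory

theorem adjunction_transport_general
    {O : Type*} [Category O] [Abelian O] [EnoughProjectives O]
    {O' : Type*} [Category O'] [Abelian O'] [EnoughProjectives O']
    {H : Type*} [Category H]
    {H' : Type*} [Category H']
    (Z : O ⥤ H)
    (Z' : O' ⥤ H')
    (hZ : ∀ P Q : O, Projective P → Projective Q →
      Function.Bijective (fun f : P ⟶ Q => Z.map f))
    (hZ' : ∀ P Q : O', Projective P → Projective Q →
      Function.Bijective (fun f : P ⟶ Q => Z'.map f))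
    (E : O ⥤ O') [PreservesFiniteColimits E]
    (F : O' ⥤ O) [PreservesFiniteColimits F]
    (hE : ∀ X : O, Projective X → Projective (E.obj X))
    (hF : ∀ X : O', Projective X → Projective (F.obj X))
    (E' : H ⥤ H') (F' : H' ⥤ H)
    (isoE : E ⋙ Z' ≅ Z ⋙ E') (isoF : F ⋙ Z ≅ Z' ⋙ F')
    (adjE'F' : E' ⊣ F') :
    Nonempty (E ⊣ F) := by
  obtain ⟨hZP⟩ := (isProjective O).nonempty_fullyFaithful_ι_comp Z hZ
  obtain ⟨hZ'P⟩ := (isProjective O').nonempty_fullyFaithful_ι_comp Z' hZ'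
  exact ⟨Adjunction.ofRestrictProjectives (hL := hE) (hR := hF)
    (adjE'F'.restrictFullyFaithful hZP hZ'P (Functor.isoWhiskerLeft _ isoE.symm)
      (Functor.isoWhiskerLeft _ isoF.symm))⟩

/-- Let `O` and `O'` be abelian categories with enough projectives and
`H`, `H'` abelian categories.  Let `Z : O ⥤ H` and `Z' : O' ⥤ H'` be exact functors
whose restrictions to projective objects are fully faithful.  Let `E : O ⥤ O'` and
`F : O' ⥤ O` be exact functors mapping projectives to projectives, with `F` left adjoint
to `E`.  Let `E' : H ⥤ H'`, `F' : H' ⥤ H` be functors equipped with natural isomorphisms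
`Z' ∘ E ≅ E' ∘ Z` and `Z ∘ F ≅ F' ∘ Z'`.  If `E'` is left adjoint to `F'`, then `E` is
left adjoint to `F` (so, together with the assumption `F ⊣ E`, the pair `(E, F)` is
biadjoint). -/
theorem adjunction_transport
    {O : Type*} [Category O] [Abelian O] [EnoughProjectives O]
    {O' : Type*} [Category O'] [Abelian O'] [EnoughProjectives O']
    {H : Type*} [Category H] [Abelian H]
    {H' : Type*} [Category H'] [Abelian H']
    (Z : O ⥤ H) [Z.Additive] [PreservesFiniteLimits Z] [PreservesFiniteColimits Z]
    (Z' : O' ⥤ H') [Z'.Additive] [PreservesFiniteLimits Z'] [PreservesFiniteColimits Z']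
    (hZ : ∀ P Q : O, Projective P → Projective Q →
      Function.Bijective (fun f : P ⟶ Q => Z.map f))
    (hZ' : ∀ P Q : O', Projective P → Projective Q →
      Function.Bijective (fun f : P ⟶ Q => Z'.map f))
    (E : O ⥤ O') [E.Additive] [PreservesFiniteLimits E] [PreservesFiniteColimits E]
    (F : O' ⥤ O) [F.Additive] [PreservesFiniteLimits F] [PreservesFiniteColimits F]
    (hE : ∀ X : O, Projective X → Projective (E.obj X))
    (hF : ∀ X : O', Projective X → Projective (F.obj X))
    (adjFE : F ⊣ E)
    (E' : H ⥤ H') (F' : H' ⥤ H)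
    (isoE : E ⋙ Z' ≅ Z ⋙ E') (isoF : F ⋙ Z ≅ Z' ⋙ F')
    (adjE'F' : E' ⊣ F') :
    Nonempty (E ⊣ F) :=
  adjunction_transport_general Z Z' hZ hZ' E F hE hF E' F' isoE isoF adjE'F'
end
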